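/- arXiv:1807.09511 — 2 statements merged into one kernel-verified Lean document; each statement's English description precedes it below -/
import Mathlib

section
/- Let B be a random variable, f a bounded measurable function of B, c a bounded measurable function of another random variable, and suppose Z̃ is sampled conditionally on B and Z is sampled unconditionally with the property that the marginal law of Z̃ given the joint sampling over B equals the law needed so that E[E[c(Z̃)|B]] and E[c(Z)] are both well-defined. Then E_B[f(B)] = E_Z[ E_{B|Z}[ f(B) − E_{Z̃|B}[c(Z̃)] ] + c(Z) ] whenever B given Z and Z̃ given B are defined on a common joint law with Z's marginal consistent, i.e., the control-variate-plus-correction decomposition is unbiased. -/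
open MeasureTheory

theorem rebar_unbiasedness
    {Ω : Type*} {mΩ : MeasurableSpace Ω} {μ : Measure Ω} [IsProbabilityMeasure μ]
    {β γ : Type*} [MeasurableSpace β] [MeasurableSpace γ]
    (Z Zt : Ω → γ) (B : Ω → β) (f : β → ℝ) (c : γ → ℝ)
    (hZ : Measurable Z) (hZt : Measurable Zt) (hB : Measurable B)
    (hf : Measurable f) (hfbdd : ∃ C, ∀ b, |f b| ≤ C)
    (hc : Measurable c) (hcbdd : ∃ C, ∀ z, |c z| ≤ C)
    (hmarginal : Measure.map Zt μ = Measure.map Z μ) :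
    ∫ ω, f (B ω) ∂μ
      = ∫ ω, (f (B ω)
          - (μ[(fun ω' => c (Zt ω')) | MeasurableSpace.comap B inferInstance]) ω
          + c (Z ω)) ∂μ := by
  obtain ⟨Cf, hCf⟩ := hfbdd
  obtain ⟨Cc, hCc⟩ := hcbdd
  have hfB : Integrable (fun ω => f (B ω)) μ := by
    refine Integrable.mono' (integrable_const Cf) ((hf.comp hB).aestronglyMeasurable) ?_
    exact Filter.Eventually.of_forall fun ω => by
      simpa [Real.norm_eq_abs] using hCf (B ω)
  have hcZt : Integrable (fun ω => c (Zt ω)) μ := by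
    refine Integrable.mono' (integrable_const Cc) ((hc.comp hZt).aestronglyMeasurable) ?_
    exact Filter.Eventually.of_forall fun ω => by
      simpa [Real.norm_eq_abs] using hCc (Zt ω)
  have hcZ : Integrable (fun ω => c (Z ω)) μ := by
    refine Integrable.mono' (integrable_const Cc) ((hc.comp hZ).aestronglyMeasurable) ?_
    exact Filter.Eventually.of_forall fun ω => by
      simpa [Real.norm_eq_abs] using hCc (Z ω)
  have hle : MeasurableSpace.comap B inferInstance ≤ mΩ := hB.comap_le
  have hcond : Integrable (μ[(fun ω' => c (Zt ω')) | MeasurableSpace.comap B inferInstance]) μ :=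
    integrable_condExp
  have hZtZ : ∫ ω, c (Zt ω) ∂μ = ∫ ω, c (Z ω) ∂μ := by
    rw [← integral_map hZt.aemeasurable hc.aestronglyMeasurable,
      ← integral_map hZ.aemeasurable hc.aestronglyMeasurable, hmarginal]
  have key : ∫ ω, (f (B ω)
          - (μ[(fun ω' => c (Zt ω')) | MeasurableSpace.comap B inferInstance]) ω
          + c (Z ω)) ∂μ
      = (∫ ω, f (B ω) ∂μ
          - ∫ ω, (μ[(fun ω' => c (Zt ω')) | MeasurableSpace.comap B inferInstance]) ω ∂μ)
          + ∫ ω, c (Z ω) ∂μ := by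
    rw [integral_add (f := fun ω => f (B ω)
            - (μ[(fun ω' => c (Zt ω')) | MeasurableSpace.comap B inferInstance]) ω)
          (g := fun ω => c (Z ω)) (hfB.sub hcond) hcZ,
        integral_sub hfB hcond]
  rw [key, integral_condExp hle, hZtZ]
  ring
end

section
/- Let Z ∼ N(μ, σ²) with σ > 0 and let f : ℝ → ℝ be differentiable with f and f' of polynomial growth. Writing Z = μ + σ·ε with ε ∼ N(0,1), we have ∂/∂μ E[f(Z)] = E[f'(μ + σ·ε)] and ∂/∂σ E[f(Z)] = E[f'(μ + σ·ε)·ε]. -/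
open MeasureTheory ProbabilityTheory

/-!
Differentiate under the integral sign along the line `t ↦ u + t * v`: for `|t - t₀| < 1` the
derivative `f' (u + t v) * v` is dominated by a multiple of `(1 + |u| + |v|) ^ (l + 1)`, which is
integrable as soon as `u` and `v` have moments of every order, as a Gaussian does. The two
gradients are the cases `(u, v) = (σ ε, 1)` and `(u, v) = (m, ε)`.
-/

section

variable {Ω : Type*} {mΩ : MeasurableSpace Ω} {μ : Measure Ω}

lemma memLp_of_map_eq_gaussianReal {e : Ω → ℝ} (he : AEMeasurable e μ) {m : ℝ} {v : NNReal}
    (hgauss : μ.map e = gaussianReal m v) (n : ℕ) : MemLp e n μ := by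
  have h := memLp_id_gaussianReal' (μ := m) (v := v) n (ENNReal.natCast_ne_top n)
  rwa [← hgauss, memLp_map_measure_iff aestronglyMeasurable_id he] at h

lemma one_add_abs_add_mul_le {t T : ℝ} (ht : |t| ≤ T) (a b : ℝ) :
    1 + |a + t * b| ≤ (1 + T) * (1 + |a| + |b|) := by
  have h := abs_add_le a (t * b)
  rw [abs_mul] at h
  nlinarith [abs_nonneg a, abs_nonneg b, abs_nonneg t,
    mul_le_mul_of_nonneg_right ht (abs_nonneg b)]

lemma nonneg_of_abs_le_mul_one_add_abs_pow {g : ℝ → ℝ} {C : ℝ} {k : ℕ}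
    (hg : ∀ x, |g x| ≤ C * (1 + |x|) ^ k) : 0 ≤ C :=
  nonneg_of_mul_nonneg_left ((abs_nonneg _).trans (hg 0)) (by positivity)

lemma abs_comp_add_mul_le {g : ℝ → ℝ} {C : ℝ} {k : ℕ} (hg : ∀ x, |g x| ≤ C * (1 + |x|) ^ k)
    {t T : ℝ} (ht : |t| ≤ T) (a b : ℝ) :
    |g (a + t * b)| ≤ C * (1 + T) ^ k * (1 + |a| + |b|) ^ k := by
  have hC := nonneg_of_abs_le_mul_one_add_abs_pow hg
  calc |g (a + t * b)| ≤ C * (1 + |a + t * b|) ^ k := hg _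
    _ ≤ C * ((1 + T) * (1 + |a| + |b|)) ^ k := by gcongr; exact one_add_abs_add_mul_le ht a b
    _ = C * (1 + T) ^ k * (1 + |a| + |b|) ^ k := by rw [mul_pow, mul_assoc]

lemma integrable_one_add_abs_add_abs_pow [IsFiniteMeasure μ] {u v : Ω → ℝ} (n : ℕ)
    (hu : MemLp u n μ) (hv : MemLp v n μ) :
    Integrable (fun ω => (1 + |u ω| + |v ω|) ^ n) μ := by
  have h := (((memLp_const (1 : ℝ)).add hu.norm).add hv.norm).integrable_norm_pow'
  refine h.congr (ae_of_all _ fun ω => ?_)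
  simp only [Pi.add_apply, Real.norm_eq_abs]
  rw [abs_of_nonneg (by positivity)]

theorem hasDerivAt_integral_comp_add_mul [IsFiniteMeasure μ] {f : ℝ → ℝ}
    (hf : Differentiable ℝ f) (hfgrowth : ∃ C k, ∀ x : ℝ, |f x| ≤ C * (1 + |x|) ^ k)
    (hf'growth : ∃ C k, ∀ x : ℝ, |deriv f x| ≤ C * (1 + |x|) ^ k)
    {u v : Ω → ℝ} (hu : ∀ n : ℕ, MemLp u n μ) (hv : ∀ n : ℕ, MemLp v n μ) (t₀ : ℝ) :
    HasDerivAt (fun t => ∫ ω, f (u ω + t * v ω) ∂μ)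
      (∫ ω, deriv f (u ω + t₀ * v ω) * v ω ∂μ) t₀ := by
  obtain ⟨C, k, hf_le⟩ := hfgrowth
  obtain ⟨D, l, hf'_le⟩ := hf'growth
  have hM (n : ℕ) := integrable_one_add_abs_add_abs_pow n (hu n) (hv n)
  have hline (t : ℝ) : AEMeasurable (fun ω => u ω + t * v ω) μ :=
    (hu 0).aestronglyMeasurable.aemeasurable.add
      ((hv 0).aestronglyMeasurable.aemeasurable.const_mul t)
  have hF_int : Integrable (fun ω => f (u ω + t₀ * v ω)) μ :=
    ((hM k).const_mul (C * (1 + |t₀|) ^ k)).mono'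
      (hf.continuous.comp_aestronglyMeasurable (hline t₀).aestronglyMeasurable)
      (ae_of_all _ fun ω => abs_comp_add_mul_le hf_le le_rfl _ _)
  refine (hasDerivAt_integral_of_dominated_loc_of_deriv_le (Metric.ball_mem_nhds t₀ one_pos)
    (F' := fun t ω => deriv f (u ω + t * v ω) * v ω)
    (bound := fun ω => D * (1 + (|t₀| + 1)) ^ l * (1 + |u ω| + |v ω|) ^ (l + 1))
    (Filter.Eventually.of_forall fun t =>
      hf.continuous.comp_aestronglyMeasurable (hline t).aestronglyMeasurable)
    hF_int
    (((measurable_deriv f).comp_aemeasurable (hline t₀)).mul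
      (hv 0).aestronglyMeasurable.aemeasurable).aestronglyMeasurable
    (ae_of_all _ fun ω t ht => ?_) ((hM (l + 1)).const_mul _)
    (ae_of_all _ fun ω t _ => ?_)).2
  · have ht' : |t| ≤ |t₀| + 1 := by
      have := abs_sub_abs_le_abs_sub t t₀
      rw [Metric.mem_ball, Real.dist_eq] at ht
      linarith
    have hD := nonneg_of_abs_le_mul_one_add_abs_pow hf'_le
    rw [Real.norm_eq_abs, abs_mul, pow_succ, ← mul_assoc]
    exact mul_le_mul (abs_comp_add_mul_le hf'_le ht' _ _) (by linarith [abs_nonneg (u ω)])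
      (abs_nonneg _) (by positivity)
  · simpa [Function.comp_def] using
      (hf _).hasDerivAt.comp t (((hasDerivAt_id t).mul_const (v ω)).const_add (u ω))

end

theorem gaussian_reparameterization_gradients_general
    {Ω : Type*} {mΩ : MeasurableSpace Ω} {P : Measure Ω} [IsProbabilityMeasure P]
    (e : Ω → ℝ) (he : Measurable e)
    (hgauss : Measure.map e P = gaussianReal 0 1)
    (f : ℝ → ℝ) (hf : Differentiable ℝ f)
    (hfgrowth : ∃ C k, ∀ x : ℝ, |f x| ≤ C * (1 + |x|) ^ k)
    (hf'growth : ∃ C k, ∀ x : ℝ, |deriv f x| ≤ C * (1 + |x|) ^ k)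
    (m σ : ℝ) :
    HasDerivAt (fun m' : ℝ => ∫ ω, f (m' + σ * e ω) ∂P)
      (∫ ω, deriv f (m + σ * e ω) ∂P) m
    ∧ HasDerivAt (fun s : ℝ => ∫ ω, f (m + s * e ω) ∂P)
      (∫ ω, deriv f (m + σ * e ω) * e ω ∂P) σ := by
  have he_moments := memLp_of_map_eq_gaussianReal he.aemeasurable hgauss
  have hconst (c : ℝ) (n : ℕ) : MemLp (fun _ : Ω => c) n P := memLp_const c
  constructor
  · have h := hasDerivAt_integral_comp_add_mul hf hfgrowth hf'growth
      (fun n => (he_moments n).const_mul σ) (hconst 1) m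
    simpa only [mul_one, add_comm] using h
  · exact hasDerivAt_integral_comp_add_mul hf hfgrowth hf'growth (hconst m) he_moments σ

theorem gaussian_reparameterization_gradients
    {Ω : Type*} {mΩ : MeasurableSpace Ω} {P : Measure Ω} [IsProbabilityMeasure P]
    (e : Ω → ℝ) (he : Measurable e)
    (hgauss : Measure.map e P = gaussianReal 0 1)
    (f : ℝ → ℝ) (hf : Differentiable ℝ f)
    (hfgrowth : ∃ C k, ∀ x : ℝ, |f x| ≤ C * (1 + |x|) ^ k)
    (hf'growth : ∃ C k, ∀ x : ℝ, |deriv f x| ≤ C * (1 + |x|) ^ k)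
    (m σ : ℝ) (hσ : 0 < σ) :
    HasDerivAt (fun m' : ℝ => ∫ ω, f (m' + σ * e ω) ∂P)
      (∫ ω, deriv f (m + σ * e ω) ∂P) m
    ∧ HasDerivAt (fun s : ℝ => ∫ ω, f (m + s * e ω) ∂P)
      (∫ ω, deriv f (m + σ * e ω) * e ω ∂P) σ :=
  gaussian_reparameterization_gradients_general (mΩ := mΩ) e he hgauss f hf hfgrowth hf'growth m σ
end
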